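/- arXiv:2005.13715 — 2 statements merged into one kernel-verified Lean document; each statement's English description precedes it below -/
import Mathlib

section
/- Let C ⊆ 𝔽_q^n be a code with |C| ≥ 2 whose minimum distance satisfies d_w(C) = m_w + (d(C) − 1)·M_w. Then C is diameter perfect if and only if C is MDS. -/
set_option linter.unusedSectionVars false

open scoped Classical

noncomputable section

variable {F : Type*} [Field F] [Fintype F]

def IsWeight (w : F → ℕ) : Prop :=
  (∀ a : F, w a = 0 ↔ a = 0) ∧ (∀ a : F, w (-a) = w a) ∧
    (∀ a b : F, w (a + b) ≤ w a + w b)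

def Mw (w : F → ℕ) : ℕ := Finset.univ.sup w

def mw (w : F → ℕ) : ℕ := sInf {s | ∃ a : F, a ≠ 0 ∧ w a = s}

def rho {n : ℕ} (u : Fin n → F) : ℕ :=
  (Finset.univ.filter fun j => u j ≠ 0).sup fun j => (j : ℕ) + 1

lemma rho_le {n : ℕ} (u : Fin n → F) : rho u ≤ n :=
  Finset.sup_le fun j _ => j.isLt

def chainWeight {n : ℕ} (w : F → ℕ) (u : Fin n → F) : ℕ :=
  if h : rho u = 0 then 0
  else w (u ⟨rho u - 1,
        lt_of_lt_of_le (Nat.sub_lt (Nat.pos_of_ne_zero h) Nat.one_pos) (rho_le u)⟩)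
      + (rho u - 1) * Mw w

def dChain {n : ℕ} (w : F → ℕ) (u v : Fin n → F) : ℕ := chainWeight w (u - v)

def ballW {n : ℕ} (w : F → ℕ) (x : Fin n → F) (r : ℕ) : Finset (Fin n → F) :=
  Finset.univ.filter fun v => dChain w x v ≤ r

def diamW {n : ℕ} (w : F → ℕ) (A : Finset (Fin n → F)) : ℕ :=
  (A ×ˢ A).sup fun p => dChain w p.1 p.2

def AstarW (w : F → ℕ) (n D : ℕ) : ℕ :=
  Finset.univ.sup fun A : Finset (Fin n → F) => if diamW w A ≤ D then A.card else 0

def winv (w : F → ℕ) (S : ℕ) : Finset F :=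
  Finset.univ.filter fun a => a ≠ 0 ∧ w a ≤ S

def dP {n : ℕ} (C : Finset (Fin n → F)) : ℕ :=
  sInf {s | ∃ x ∈ C, ∃ y ∈ C, x ≠ y ∧ rho (x - y) = s}

def dW {n : ℕ} (w : F → ℕ) (C : Finset (Fin n → F)) : ℕ :=
  sInf {s | ∃ x ∈ C, ∃ y ∈ C, x ≠ y ∧ dChain w x y = s}

def floorW (w : F → ℕ) (n D : ℕ) : ℕ :=
  (Finset.univ.filter fun u : Fin n → F => chainWeight w u < D).sup (chainWeight w)

def nonArch (w : F → ℕ) : Prop := ∀ a b : F, w (a + b) ≤ max (w a) (w b)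

def Sw (w : F → ℕ) : ℕ :=
  if nonArch w then Mw w
  else sInf {s | ∃ a b : F, max (w a) (w b) < w (a - b) ∧ max (w a) (w b) = s}

def WwCond (w : F → ℕ) (S : ℕ) (K : Finset F) : Prop :=
  (∀ a ∈ K, Sw w ≤ w a ∧ w a ≤ S) ∧
  (∀ a ∈ K, ∀ b : F, w b ≤ Sw w - 1 → w (a - b) ≤ S) ∧
  (∀ a ∈ K, ∀ b ∈ K, w (a - b) ≤ S)

def WwCard (w : F → ℕ) (S : ℕ) : ℕ :=
  Finset.univ.sup fun K : Finset F => if WwCond w S K then K.card else 0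

def idealOf {n : ℕ} (P : PartialOrder (Fin n)) (u : Fin n → F) : Finset (Fin n) :=
  Finset.univ.filter fun j => ∃ i : Fin n, u i ≠ 0 ∧ P.le j i

def maxOf {n : ℕ} (P : PartialOrder (Fin n)) (u : Fin n → F) : Finset (Fin n) :=
  (idealOf P u).filter fun j => ∀ k ∈ idealOf P u, P.le j k → j = k

def posetWeight {n : ℕ} (P : PartialOrder (Fin n)) (w : F → ℕ) (u : Fin n → F) : ℕ :=
  (∑ i ∈ maxOf P u, w (u i)) + Mw w * ((idealOf P u) \ (maxOf P u)).card

def dPoset {n : ℕ} (P : PartialOrder (Fin n)) (w : F → ℕ) (u v : Fin n → F) : ℕ :=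
  posetWeight P w (u - v)

def ballP {n : ℕ} (P : PartialOrder (Fin n)) (w : F → ℕ) (x : Fin n → F) (r : ℕ) :
    Finset (Fin n → F) :=
  Finset.univ.filter fun v => dPoset P w x v ≤ r

def diamP {n : ℕ} (P : PartialOrder (Fin n)) (w : F → ℕ) (A : Finset (Fin n → F)) : ℕ :=
  (A ×ˢ A).sup fun p => dPoset P w p.1 p.2

end

noncomputable section HelperLemmas

variable {F : Type*} [Field F] [Fintype F]

lemma mw_pos' (w : F → ℕ) (hw : IsWeight w) : 1 ≤ mw w := by
  have hne : {s | ∃ a : F, a ≠ 0 ∧ w a = s}.Nonempty := ⟨w 1, 1, one_ne_zero, rfl⟩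
  obtain ⟨a, ha, hwa⟩ := Nat.sInf_mem hne
  have h0 : w a ≠ 0 := fun h => ha ((hw.1 a).mp h)
  have h1 : mw w = w a := hwa.symm
  omega

lemma mw_le' (w : F → ℕ) {a : F} (ha : a ≠ 0) : mw w ≤ w a := Nat.sInf_le ⟨a, ha, rfl⟩

lemma w_le_Mw' (w : F → ℕ) (a : F) : w a ≤ Mw w := Finset.le_sup (Finset.mem_univ a)

lemma exists_Mw' (w : F → ℕ) (hw : IsWeight w) : ∃ a : F, a ≠ 0 ∧ w a = Mw w := by
  obtain ⟨a, -, ha⟩ := Finset.exists_mem_eq_sup Finset.univ Finset.univ_nonempty w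
  have hM : Mw w = w a := ha
  refine ⟨a, ?_, hM.symm⟩
  intro h
  subst h
  have hz : w (0 : F) = 0 := (hw.1 0).mpr rfl
  have h1 : w (1 : F) ≠ 0 := fun h => one_ne_zero ((hw.1 1).mp h)
  have h2 := w_le_Mw' w (1 : F)
  omega

lemma rho_eq_zero' {n : ℕ} {u : Fin n → F} : rho u = 0 ↔ u = 0 := by
  constructor
  · intro h
    funext j
    show u j = 0
    by_contra hj
    have : (j : ℕ) + 1 ≤ rho u :=
      Finset.le_sup (f := fun j : Fin n => (j : ℕ) + 1) (by simp [hj])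
    omega
  · intro h
    subst h
    simp [rho]

lemma apply_eq_zero_of_rho_le' {n : ℕ} {u : Fin n → F} {k : ℕ} (h : rho u ≤ k)
    (j : Fin n) (hj : k ≤ (j : ℕ)) : u j = 0 := by
  by_contra hne
  have : (j : ℕ) + 1 ≤ rho u :=
    Finset.le_sup (f := fun j : Fin n => (j : ℕ) + 1) (by simp [hne])
  omega

lemma rho_apply_ne_zero' {n : ℕ} {u : Fin n → F} (h : rho u ≠ 0) :
    u ⟨rho u - 1,
      lt_of_lt_of_le (Nat.sub_lt (Nat.pos_of_ne_zero h) Nat.one_pos) (rho_le u)⟩ ≠ 0 := by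
  have hu : u ≠ 0 := fun e => h (rho_eq_zero'.mpr e)
  have hex : ∃ j, u j ≠ 0 := by
    by_contra hc
    push_neg at hc
    exact hu (funext fun j => hc j)
  obtain ⟨j0, hj0⟩ := hex
  have hne : (Finset.univ.filter fun j : Fin n => u j ≠ 0).Nonempty :=
    ⟨j0, by simp [hj0]⟩
  obtain ⟨j, hjmem, hje⟩ := Finset.exists_mem_eq_sup _ hne (fun j : Fin n => (j : ℕ) + 1)
  have hje' : rho u = (j : ℕ) + 1 := hje
  have hfin : (⟨rho u - 1,
      lt_of_lt_of_le (Nat.sub_lt (Nat.pos_of_ne_zero h) Nat.one_pos) (rho_le u)⟩ : Fin n) = j :=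
    Fin.ext (by simp only []; omega)
  rw [hfin]
  exact (Finset.mem_filter.mp hjmem).2

lemma chainWeight_lower' {n : ℕ} (w : F → ℕ) (hw : IsWeight w) {u : Fin n → F} (hu : u ≠ 0) :
    mw w + (rho u - 1) * Mw w ≤ chainWeight w u := by
  have h : rho u ≠ 0 := fun e => hu (rho_eq_zero'.mp e)
  rw [chainWeight, dif_neg h]
  exact Nat.add_le_add_right (mw_le' w (rho_apply_ne_zero' h)) _

lemma chainWeight_upper' {n : ℕ} (w : F → ℕ) (u : Fin n → F) :
    chainWeight w u ≤ rho u * Mw w := by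
  rw [chainWeight]
  split
  · simp
  · rename_i h
    have h1 : 1 ≤ rho u := Nat.pos_of_ne_zero h
    have h2 : w (u ⟨rho u - 1,
        lt_of_lt_of_le (Nat.sub_lt (Nat.pos_of_ne_zero h) Nat.one_pos) (rho_le u)⟩)
        + (rho u - 1) * Mw w ≤ Mw w + (rho u - 1) * Mw w :=
      Nat.add_le_add_right (w_le_Mw' w _) _
    have h3 : Mw w + (rho u - 1) * Mw w = rho u * Mw w := by
      calc Mw w + (rho u - 1) * Mw w = (rho u - 1 + 1) * Mw w := by ring
        _ = rho u * Mw w := by rw [Nat.sub_add_cancel h1]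
    omega

lemma rho_le_of_cw_lt' {n : ℕ} (w : F → ℕ) (hw : IsWeight w) {u : Fin n → F} {d : ℕ}
    (h : chainWeight w u < mw w + (d - 1) * Mw w) : rho u ≤ d - 1 := by
  by_cases hu : u = 0
  · have : rho u = 0 := rho_eq_zero'.mpr hu
    omega
  · have hl := chainWeight_lower' w hw hu
    have h2 : (rho u - 1) * Mw w < (d - 1) * Mw w := by omega
    have h3 : rho u - 1 < d - 1 := lt_of_mul_lt_mul_right h2 (Nat.zero_le _)
    have h4 : rho u ≠ 0 := fun e => hu (rho_eq_zero'.mp e)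
    omega

lemma floorW_eq' {n : ℕ} (w : F → ℕ) (hw : IsWeight w) {d : ℕ} (hd1 : 1 ≤ d) (hdn : d ≤ n) :
    floorW w n (mw w + (d - 1) * Mw w) = (d - 1) * Mw w := by
  apply le_antisymm
  · apply Finset.sup_le
    intro u hu
    rw [Finset.mem_filter] at hu
    have h1 := rho_le_of_cw_lt' w hw hu.2
    calc chainWeight w u ≤ rho u * Mw w := chainWeight_upper' w u
      _ ≤ (d - 1) * Mw w := Nat.mul_le_mul_right _ h1
  · rcases Nat.eq_or_lt_of_le hd1 with h1 | h2
    · simp [← h1]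
    · obtain ⟨a, ha0, haM⟩ := exists_Mw' w hw
      have hd2n : d - 2 < n := by omega
      set u : Fin n → F := fun j => if (j : ℕ) = d - 2 then a else 0 with hudef
      have huj : u ⟨d - 2, hd2n⟩ = a := if_pos rfl
      have hrho : rho u = d - 1 := by
        apply le_antisymm
        · apply Finset.sup_le
          intro j hj
          rw [Finset.mem_filter] at hj
          have hjv : (j : ℕ) = d - 2 := by
            by_contra hc
            exact hj.2 (if_neg hc)
          omega
        · have hmem : (⟨d - 2, hd2n⟩ : Fin n) ∈
              Finset.univ.filter (fun j : Fin n => u j ≠ 0) := by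
            simp only [Finset.mem_filter, Finset.mem_univ, true_and, huj]
            exact ha0
          have := Finset.le_sup (f := fun j : Fin n => (j : ℕ) + 1) hmem
          have h' : d - 2 + 1 ≤ rho u := this
          omega
      have hrne : rho u ≠ 0 := by omega
      have hcw : chainWeight w u = (d - 1) * Mw w := by
        rw [chainWeight, dif_neg hrne]
        have hfin : (⟨rho u - 1,
            lt_of_lt_of_le (Nat.sub_lt (Nat.pos_of_ne_zero hrne) Nat.one_pos)
              (rho_le u)⟩ : Fin n) = ⟨d - 2, hd2n⟩ :=
          Fin.ext (by simp only []; omega)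
        rw [hfin, huj, haM, hrho]
        have hds : d - 1 - 1 = d - 2 := by omega
        have hd1' : d - 1 = (d - 2) + 1 := by omega
        rw [hds]
        calc Mw w + (d - 2) * Mw w = (d - 2 + 1) * Mw w := by ring
          _ = (d - 1) * Mw w := by rw [← hd1']
      have hmem2 : u ∈ Finset.univ.filter
          (fun v : Fin n → F => chainWeight w v < mw w + (d - 1) * Mw w) := by
        rw [Finset.mem_filter]
        refine ⟨Finset.mem_univ u, ?_⟩
        rw [hcw]
        have := mw_pos' w hw
        omega
      calc (d - 1) * Mw w = chainWeight w u := hcw.symm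
        _ ≤ floorW w n (mw w + (d - 1) * Mw w) := Finset.le_sup hmem2

set_option maxHeartbeats 1000000 in
lemma Astar_eq' {n : ℕ} (w : F → ℕ) (hw : IsWeight w) {d : ℕ} (hd1 : 1 ≤ d) (hdn : d ≤ n) :
    AstarW w n ((d - 1) * Mw w) = Fintype.card F ^ (d - 1) := by
  classical
  have hdn' : d - 1 ≤ n := by omega
  set T : Finset (Fin n → F) :=
    Finset.univ.filter (fun u : Fin n → F => ∀ j : Fin n, d - 1 ≤ (j : ℕ) → u j = 0) with hT
  have hcardT : T.card = Fintype.card F ^ (d - 1) := by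
    have key : T.card = (Finset.univ : Finset (Fin (d - 1) → F)).card := by
      refine Finset.card_bij'
        (fun u _ => fun j : Fin (d - 1) => u ⟨(j : ℕ), lt_of_lt_of_le j.isLt hdn'⟩)
        (fun f _ => fun k : Fin n => if h : (k : ℕ) < d - 1 then f ⟨(k : ℕ), h⟩ else 0)
        (fun u _ => Finset.mem_univ _) ?_ ?_ ?_
      · intro f _
        rw [hT, Finset.mem_filter]
        exact ⟨Finset.mem_univ _, fun j hj => dif_neg (by omega)⟩
      · intro u hu
        funext k
        by_cases hk : (k : ℕ) < d - 1
        · simp [hk]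
        · rw [hT, Finset.mem_filter] at hu
          simp only [dif_neg hk]
          exact (hu.2 k (by omega)).symm
      · intro f _
        funext j
        simp [j.isLt]
    rw [key, Finset.card_univ, Fintype.card_fun, Fintype.card_fin]
  have hdiamT : diamW w T ≤ (d - 1) * Mw w := by
    apply Finset.sup_le
    intro p hp
    rw [Finset.mem_product] at hp
    have hrho : rho (p.1 - p.2) ≤ d - 1 := by
      apply Finset.sup_le
      intro j hj
      rw [Finset.mem_filter] at hj
      by_contra hc
      have hjd : d - 1 ≤ (j : ℕ) := by omega
      simp only [hT, Finset.mem_filter] at hp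
      have h1 := hp.1.2 j hjd
      have h2 := hp.2.2 j hjd
      apply hj.2
      show p.1 j - p.2 j = 0
      rw [h1, h2, sub_zero]
    calc dChain w p.1 p.2 ≤ rho (p.1 - p.2) * Mw w := chainWeight_upper' w _
      _ ≤ (d - 1) * Mw w := Nat.mul_le_mul_right _ hrho
  apply le_antisymm
  · apply Finset.sup_le
    intro A _
    split_ifs with hA
    · have hAle : A.card ≤ (Finset.univ : Finset (Fin (d - 1) → F)).card := by
        apply Finset.card_le_card_of_injOn
          (fun x => fun j : Fin (d - 1) => x ⟨(j : ℕ), lt_of_lt_of_le j.isLt hdn'⟩)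
          (fun a _ => Finset.mem_univ _)
        intro x hx y hy hxy
        rw [Finset.mem_coe] at hx hy
        funext k
        by_cases hk : (k : ℕ) < d - 1
        · have := congrFun hxy ⟨(k : ℕ), hk⟩
          simpa using this
        · have hdc0 : dChain w x y ≤ diamW w A :=
            Finset.le_sup (f := fun p : (Fin n → F) × (Fin n → F) => dChain w p.1 p.2)
              (show (x, y) ∈ A ×ˢ A from Finset.mem_product.mpr ⟨hx, hy⟩)
          have hdc : dChain w x y ≤ (d - 1) * Mw w := le_trans hdc0 hA
          have hmwp := mw_pos' w hw
          have he : dChain w x y = chainWeight w (x - y) := rfl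
          have hlt : chainWeight w (x - y) < mw w + (d - 1) * Mw w := by omega
          have hrho := rho_le_of_cw_lt' w hw hlt
          have hz : (x - y) k = 0 := apply_eq_zero_of_rho_le' hrho k (by omega)
          have hz' : x k - y k = 0 := hz
          exact sub_eq_zero.mp hz'
      rw [Finset.card_univ, Fintype.card_fun, Fintype.card_fin] at hAle
      exact hAle
    · exact Nat.zero_le _
  · refine le_trans (le_of_eq ?_) (Finset.le_sup (f := fun A : Finset (Fin n → F) =>
        if diamW w A ≤ (d - 1) * Mw w then A.card else 0) (Finset.mem_univ T))
    show Fintype.card F ^ (d - 1) = if diamW w T ≤ (d - 1) * Mw w then T.card else 0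
    rw [if_pos hdiamT, hcardT]

end HelperLemmas

theorem stmt9 {F : Type*} [Field F] [Fintype F] {n : ℕ} (hn : 1 ≤ n)
    (w : F → ℕ) (hw : IsWeight w) (C : Finset (Fin n → F)) (hC : 2 ≤ C.card)
    (hd : dW w C = mw w + (dP C - 1) * Mw w) :
    AstarW w n (floorW w n (dW w C)) * C.card = Fintype.card F ^ n ↔
      C.card = Fintype.card F ^ (n - dP C + 1) := by
  have hq : 0 < Fintype.card F := Fintype.card_pos
  obtain ⟨x, hx, y, hy, hxy⟩ := Finset.one_lt_card.mp (by omega : 1 < C.card)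
  have hSne : {s | ∃ x ∈ C, ∃ y ∈ C, x ≠ y ∧ rho (x - y) = s}.Nonempty :=
    ⟨rho (x - y), x, hx, y, hy, hxy, rfl⟩
  obtain ⟨a, ha, b, hb, hab, hrab⟩ := Nat.sInf_mem hSne
  have hdP : dP C = rho (a - b) := hrab.symm
  have hd1 : 1 ≤ dP C := by
    rw [hdP]
    have h0 : a - b ≠ 0 := sub_ne_zero.mpr hab
    have h1 : rho (a - b) ≠ 0 := fun e => h0 (rho_eq_zero'.mp e)
    omega
  have hdn : dP C ≤ n := by rw [hdP]; exact rho_le _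
  rw [hd, floorW_eq' w hw hd1 hdn, Astar_eq' w hw hd1 hdn]
  have hsum : (dP C - 1) + (n - dP C + 1) = n := by omega
  constructor
  · intro h
    have hfull : Fintype.card F ^ (dP C - 1) * Fintype.card F ^ (n - dP C + 1)
        = Fintype.card F ^ n := by rw [← pow_add, hsum]
    exact Nat.eq_of_mul_eq_mul_left (pow_pos hq _) (h.trans hfull.symm)
  · intro h
    rw [h, ← pow_add, hsum]
end

section
/- Let C ⊆ 𝔽_q^n be a code with |C| = q^k for some integer 1 ≤ k ≤ n. Then C is diameter perfect if and only if C is MDS. In particular, an 𝔽_q-linear code C ⊆ 𝔽_q^n with C ≠ {0} is diameter perfect if and only if C is MDS. -/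
set_option linter.unusedSectionVars false

open scoped Classical

/-!
Write `q = |F|`, `M = M_w`, `d = d(C)` and `D = ⌊d_w(C)⌋_w`. A nonzero vector `u` has chain weight
in `((ϖ(u) - 1)M, ϖ(u)M]`, and every multiple `mM` with `m ≤ n` is attained. Hence
`(d - 1)M ≤ D < d_w(C) ≤ dM`. The vectors supported on the first `d - 1` coordinates form an
anticode of diameter `≤ (d - 1)M`, so `A*(D) ≥ q^(d-1)`; an anticode of diameter `< dM` lies in a
translate of the vectors supported on the first `d` coordinates and misses a point of it, so
`A*(D) < q^d`; and the code–anticode bound gives `A*(D)·|C| ≤ q^n`. With `|C| = q^k` these three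
inequalities leave exactly one possibility for diameter perfection, namely `k = n - d + 1`.
-/

open Finset

lemma mul_pow_eq_pow_iff_of_le_of_lt {q a d k n : ℕ} (hq : 1 < q) (hdn : d ≤ n)
    (hlo : q ^ (d - 1) ≤ a) (hhi : a < q ^ d) (hle : a * q ^ k ≤ q ^ n) :
    a * q ^ k = q ^ n ↔ q ^ k = q ^ (n - d + 1) := by
  have hd : d ≠ 0 := by rintro rfl; simp at hlo hhi; omega
  have hsing : d - 1 + k ≤ n := by
    rw [← Nat.pow_le_pow_iff_right hq, pow_add]
    exact (Nat.mul_le_mul_right _ hlo).trans hle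
  rw [(Nat.pow_right_injective hq).eq_iff]
  constructor
  · intro h
    have : q ^ n < q ^ (d + k) := by
      rw [← h, pow_add]
      exact Nat.mul_lt_mul_of_pos_right hhi (by positivity)
    have := (Nat.pow_lt_pow_iff_right hq).1 this
    omega
  · intro hk
    refine le_antisymm hle ?_
    calc q ^ n = q ^ (d - 1) * q ^ k := by rw [← pow_add]; congr 1; omega
      _ ≤ a * q ^ k := Nat.mul_le_mul_right _ hlo

section ChainWeight

variable {F : Type*} [Field F] [Fintype F] {n : ℕ} {w : F → ℕ}

lemma le_rho_of_ne_zero {u : Fin n → F} {i : Fin n} (h : u i ≠ 0) : (i : ℕ) + 1 ≤ rho u :=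
  le_sup (f := fun j : Fin n => (j : ℕ) + 1) (mem_filter.2 ⟨mem_univ _, h⟩)

lemma rho_le_iff {u : Fin n → F} {m : ℕ} :
    rho u ≤ m ↔ ∀ i : Fin n, m ≤ i → u i = 0 := by
  simp only [rho, Finset.sup_le_iff, mem_filter, mem_univ, true_and]
  exact ⟨fun h i hi => by_contra fun hu => by have := h i hu; omega,
    fun h i hu => by_contra fun hi => hu (h i (by omega))⟩

lemma exists_rho_eq {u : Fin n → F} (h : u ≠ 0) :
    ∃ j : Fin n, u j ≠ 0 ∧ (j : ℕ) + 1 = rho u := by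
  obtain ⟨i, hi⟩ := Function.ne_iff.1 h
  have hne : (univ.filter fun j : Fin n => u j ≠ 0).Nonempty := ⟨i, by simpa using hi⟩
  obtain ⟨j, hj, hjr⟩ := exists_mem_eq_sup _ hne (fun j : Fin n => (j : ℕ) + 1)
  exact ⟨j, (mem_filter.1 hj).2, hjr.symm⟩

lemma rho_single {j : Fin n} {c : F} (hc : c ≠ 0) : rho (Pi.single j c) = j + 1 := by
  refine le_antisymm (rho_le_iff.2 fun i hi => ?_) ?_
  · rw [Pi.single_apply, if_neg]
    rintro rfl
    omega
  · exact le_rho_of_ne_zero (by simpa using hc)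

lemma chainWeight_eq {u : Fin n → F} {j : Fin n} (hr : (j : ℕ) + 1 = rho u) :
    chainWeight w u = w (u j) + j * Mw w := by
  have h0 : rho u ≠ 0 := by omega
  have hfin : (⟨rho u - 1, lt_of_lt_of_le (Nat.sub_lt (Nat.pos_of_ne_zero h0) Nat.one_pos)
      (rho_le u)⟩ : Fin n) = j := Fin.ext (by simp only; omega)
  rw [chainWeight, dif_neg h0, hfin, show rho u - 1 = j by omega]

lemma chainWeight_single {j : Fin n} {c : F} (hc : c ≠ 0) :
    chainWeight w (Pi.single j c) = w c + j * Mw w := by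
  rw [chainWeight_eq (j := j) (rho_single hc).symm, Pi.single_eq_same]

lemma chainWeight_le (u : Fin n → F) : chainWeight w u ≤ rho u * Mw w := by
  by_cases h : u = 0
  · simp [chainWeight, h, rho, Finset.filter_false]
  obtain ⟨j, hj, hr⟩ := exists_rho_eq h
  rw [chainWeight_eq hr, ← hr, add_mul, one_mul, add_comm]
  exact Nat.add_le_add_left (le_sup (mem_univ _)) _

lemma lt_chainWeight (hw : ∀ a : F, w a = 0 ↔ a = 0) {u : Fin n → F} (h : u ≠ 0) :
    (rho u - 1) * Mw w < chainWeight w u := by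
  obtain ⟨j, hj, hr⟩ := exists_rho_eq h
  rw [chainWeight_eq hr, show rho u - 1 = j by omega]
  have : w (u j) ≠ 0 := fun h0 => hj ((hw _).1 h0)
  omega

lemma rho_le_of_chainWeight_lt (hw : ∀ a : F, w a = 0 ↔ a = 0) {u : Fin n → F} {m : ℕ}
    (h : chainWeight w u < m * Mw w) : rho u ≤ m := by
  by_cases hu : u = 0
  · simp [hu, rho]
  have := (lt_chainWeight hw hu).trans h
  have := Nat.lt_of_mul_lt_mul_right this
  omega

lemma exists_ne_zero_weight_eq_Mw (hw : ∀ a : F, w a = 0 ↔ a = 0) :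
    ∃ c : F, c ≠ 0 ∧ w c = Mw w := by
  obtain ⟨c, -, hc⟩ := exists_mem_eq_sup univ univ_nonempty w
  refine ⟨c, fun h0 => ?_, hc.symm⟩
  have : w 1 ≤ w c := hc ▸ le_sup (mem_univ 1)
  rw [h0, (hw 0).2 rfl, Nat.le_zero, hw] at this
  exact one_ne_zero this

lemma exists_rho_eq_chainWeight_eq (hw : ∀ a : F, w a = 0 ↔ a = 0) {m : ℕ} (hm : m ≤ n) :
    ∃ u : Fin n → F, rho u = m ∧ chainWeight w u = m * Mw w := by
  obtain ⟨c, hc0, hc⟩ := exists_ne_zero_weight_eq_Mw hw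
  cases m with
  | zero => exact ⟨0, by simp [rho], by simp [chainWeight, rho]⟩
  | succ m =>
    refine ⟨Pi.single ⟨m, by omega⟩ c, rho_single hc0, ?_⟩
    rw [chainWeight_single hc0, hc]
    ring

end ChainWeight

section Codes

variable {F : Type*} [Field F] [Fintype F] {n : ℕ} {w : F → ℕ} {C : Finset (Fin n → F)}

lemma dP_le_rho {x y : Fin n → F} (hx : x ∈ C) (hy : y ∈ C) (hxy : x ≠ y) :
    dP C ≤ rho (x - y) :=
  Nat.sInf_le ⟨x, hx, y, hy, hxy, rfl⟩

lemma dW_le_dChain {x y : Fin n → F} (hx : x ∈ C) (hy : y ∈ C) (hxy : x ≠ y) :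
    dW w C ≤ dChain w x y :=
  Nat.sInf_le ⟨x, hx, y, hy, hxy, rfl⟩

lemma exists_rho_eq_dP (hC : 1 < C.card) :
    ∃ x ∈ C, ∃ y ∈ C, x ≠ y ∧ rho (x - y) = dP C := by
  obtain ⟨x, hx, y, hy, hxy⟩ := one_lt_card.1 hC
  exact Nat.sInf_mem (s := {s | ∃ x ∈ C, ∃ y ∈ C, x ≠ y ∧ rho (x - y) = s})
    ⟨_, x, hx, y, hy, hxy, rfl⟩

lemma exists_dChain_eq_dW (hC : 1 < C.card) :
    ∃ x ∈ C, ∃ y ∈ C, x ≠ y ∧ dChain w x y = dW w C := by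
  obtain ⟨x, hx, y, hy, hxy⟩ := one_lt_card.1 hC
  exact Nat.sInf_mem (s := {s | ∃ x ∈ C, ∃ y ∈ C, x ≠ y ∧ dChain w x y = s})
    ⟨_, x, hx, y, hy, hxy, rfl⟩

lemma dP_le (hC : 1 < C.card) : dP C ≤ n := by
  obtain ⟨x, -, y, -, -, h⟩ := exists_rho_eq_dP hC
  exact h ▸ rho_le _

lemma dW_le_dP_mul_Mw (hC : 1 < C.card) : dW w C ≤ dP C * Mw w := by
  obtain ⟨x, hx, y, hy, hxy, h⟩ := exists_rho_eq_dP hC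
  exact h ▸ (dW_le_dChain hx hy hxy).trans (chainWeight_le _)

lemma dP_sub_one_mul_Mw_lt_dW (hw : ∀ a : F, w a = 0 ↔ a = 0) (hC : 1 < C.card) :
    (dP C - 1) * Mw w < dW w C := by
  obtain ⟨x, hx, y, hy, hxy, h⟩ := exists_dChain_eq_dW (w := w) hC
  rw [← h]
  calc (dP C - 1) * Mw w ≤ (rho (x - y) - 1) * Mw w :=
        Nat.mul_le_mul_right _ (Nat.sub_le_sub_right (dP_le_rho hx hy hxy) 1)
    _ < chainWeight w (x - y) := lt_chainWeight hw (sub_ne_zero.2 hxy)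

lemma floorW_lt {D : ℕ} (hD : 0 < D) : floorW w n D < D :=
  (Finset.sup_lt_iff hD).2 fun _ hu => (mem_filter.1 hu).2

lemma le_floorW {D : ℕ} {u : Fin n → F} (hu : chainWeight w u < D) :
    chainWeight w u ≤ floorW w n D :=
  le_sup (mem_filter.2 ⟨mem_univ _, hu⟩)

lemma dP_sub_one_mul_Mw_le_floorW (hw : ∀ a : F, w a = 0 ↔ a = 0) (hC : 1 < C.card) :
    (dP C - 1) * Mw w ≤ floorW w n (dW w C) := by
  obtain ⟨u, -, hu⟩ := exists_rho_eq_chainWeight_eq (n := n) hw (m := dP C - 1)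
    (by have := dP_le hC; omega)
  have hlt : chainWeight w u < dW w C := by
    rw [hu]
    exact dP_sub_one_mul_Mw_lt_dW hw hC
  rw [← hu]
  exact le_floorW hlt

end Codes

section Anticodes

variable {F : Type*} [Field F] [Fintype F] {n : ℕ} {w : F → ℕ}

lemma dChain_le_diamW {A : Finset (Fin n → F)} {x y : Fin n → F} (hx : x ∈ A) (hy : y ∈ A) :
    dChain w x y ≤ diamW w A :=
  le_sup (f := fun p : (Fin n → F) × (Fin n → F) => dChain w p.1 p.2)
    (mem_product.2 ⟨hx, hy⟩ : (x, y) ∈ A ×ˢ A)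

lemma card_le_AstarW {A : Finset (Fin n → F)} {D : ℕ} (hA : diamW w A ≤ D) :
    A.card ≤ AstarW w n D := by
  have := le_sup (f := fun A : Finset (Fin n → F) => if diamW w A ≤ D then A.card else 0)
    (mem_univ A)
  rwa [if_pos hA] at this

lemma card_filter_rho_le {m : ℕ} (hm : m ≤ n) :
    (univ.filter fun u : Fin n → F => rho u ≤ m).card = Fintype.card F ^ m := by
  have : (univ.filter fun u : Fin n → F => rho u ≤ m) =
      Fintype.piFinset fun i : Fin n => if (i : ℕ) < m then univ else {0} := by
    ext u
    simp only [mem_filter, mem_univ, true_and, rho_le_iff, Fintype.mem_piFinset]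
    refine forall_congr' fun i => ?_
    by_cases hi : (i : ℕ) < m
    · simp [hi, show ¬m ≤ (i : ℕ) by omega]
    · simp [hi, show m ≤ (i : ℕ) by omega]
  rw [this, Fintype.card_piFinset]
  simp [apply_ite, Finset.prod_ite, Fin.card_filter_val_lt, hm]

lemma diamW_filter_rho_le (m : ℕ) :
    diamW w (univ.filter fun u : Fin n → F => rho u ≤ m) ≤ m * Mw w := by
  refine Finset.sup_le fun p hp => ?_
  simp only [mem_product, mem_filter, mem_univ, true_and, rho_le_iff] at hp
  refine (chainWeight_le _).trans (Nat.mul_le_mul_right _ (rho_le_iff.2 fun i hi => ?_))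
  simp [hp.1 i hi, hp.2 i hi]

lemma pow_le_AstarW {m D : ℕ} (hm : m ≤ n) (hD : m * Mw w ≤ D) :
    Fintype.card F ^ m ≤ AstarW w n D :=
  card_filter_rho_le (F := F) hm ▸ card_le_AstarW ((diamW_filter_rho_le m).trans hD)

lemma card_lt_pow_of_diamW_lt (hw : ∀ a : F, w a = 0 ↔ a = 0) {A : Finset (Fin n → F)}
    {j : ℕ} (hj : j ≤ n) (hA : diamW w A < j * Mw w) : A.card < Fintype.card F ^ j := by
  rcases A.eq_empty_or_nonempty with rfl | ⟨x₀, hx₀⟩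
  · simp only [card_empty]; positivity
  -- `A - x₀` lies in the vectors supported on the first `j` coordinates, but misses `e`,
  -- which is at distance `jM` from `0`.
  obtain ⟨e, he, hew⟩ := exists_rho_eq_chainWeight_eq hw hj
  have hsub : A.image (· - x₀) ⊆ univ.filter fun u : Fin n → F => rho u ≤ j := by
    intro v hv
    obtain ⟨u, hu, rfl⟩ := mem_image.1 hv
    exact mem_filter.2 ⟨mem_univ _,
      rho_le_of_chainWeight_lt hw ((dChain_le_diamW hu hx₀).trans_lt hA)⟩
  have he_notMem : e ∉ A.image (· - x₀) := by
    intro hmem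
    obtain ⟨u, hu, rfl⟩ := mem_image.1 hmem
    exact (dChain_le_diamW hu hx₀).not_gt (hew ▸ hA)
  calc A.card = (A.image (· - x₀)).card := (card_image_of_injective _ sub_left_injective).symm
    _ < (univ.filter fun u : Fin n → F => rho u ≤ j).card :=
        card_lt_card <| (ssubset_iff_of_subset hsub).2
          ⟨e, mem_filter.2 ⟨mem_univ _, he.le⟩, he_notMem⟩
    _ = Fintype.card F ^ j := card_filter_rho_le hj

lemma AstarW_lt_pow (hw : ∀ a : F, w a = 0 ↔ a = 0) {j D : ℕ} (hj : j ≤ n)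
    (hD : D < j * Mw w) : AstarW w n D < Fintype.card F ^ j :=
  (Finset.sup_lt_iff (by positivity)).2 fun A _ => by
    split_ifs with hA
    · exact card_lt_pow_of_diamW_lt hw hj (hA.trans_lt hD)
    · positivity

lemma card_mul_card_le_of_diamW_lt_dW {A C : Finset (Fin n → F)} (hA : diamW w A < dW w C) :
    A.card * C.card ≤ Fintype.card F ^ n := by
  calc A.card * C.card = (A ×ˢ C).card := (card_product _ _).symm
    _ ≤ (univ : Finset (Fin n → F)).card := by
        refine card_le_card_of_injOn (fun p => p.1 + p.2) (fun _ _ => mem_univ _) ?_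
        rintro ⟨a, c⟩ hac ⟨a', c'⟩ hac' h
        simp only [coe_product, Set.mem_prod, mem_coe] at hac hac' h
        obtain rfl : c = c' := by
          by_contra hne
          have hsub : c - c' = a' - a := sub_eq_sub_iff_add_eq_add.2 (by rw [add_comm c, h])
          have hdist : dChain w c c' = dChain w a' a := by rw [dChain, dChain, hsub]
          exact (dW_le_dChain hac.2 hac'.2 hne).not_gt
            (hdist ▸ (dChain_le_diamW hac'.1 hac.1).trans_lt hA)
        rw [add_right_cancel h]
    _ = Fintype.card F ^ n := by simp

lemma AstarW_mul_card_le {C : Finset (Fin n → F)} {D : ℕ} (hD : D < dW w C) :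
    AstarW w n D * C.card ≤ Fintype.card F ^ n := by
  obtain ⟨A, -, hA⟩ := exists_mem_eq_sup univ univ_nonempty fun A : Finset (Fin n → F) =>
    if diamW w A ≤ D then A.card else 0
  rw [AstarW, hA]
  split_ifs with hAD
  · exact card_mul_card_le_of_diamW_lt_dW (hAD.trans_lt hD)
  · simp

end Anticodes

theorem AstarW_floorW_dW_mul_card_eq_iff {F : Type*} [Field F] [Fintype F] {n k : ℕ}
    {w : F → ℕ} (hw : ∀ a : F, w a = 0 ↔ a = 0) {C : Finset (Fin n → F)} (hC : 1 < C.card)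
    (hk : C.card = Fintype.card F ^ k) :
    AstarW w n (floorW w n (dW w C)) * C.card = Fintype.card F ^ n ↔
      C.card = Fintype.card F ^ (n - dP C + 1) := by
  have hdW : floorW w n (dW w C) < dW w C :=
    floorW_lt ((Nat.zero_le _).trans_lt (dP_sub_one_mul_Mw_lt_dW hw hC))
  have hlo := pow_le_AstarW (n := n) (m := dP C - 1) (by have := dP_le hC; omega)
    (dP_sub_one_mul_Mw_le_floorW hw hC)
  have hhi := AstarW_lt_pow hw (dP_le hC) (hdW.trans_le (dW_le_dP_mul_Mw hC))
  have hle := AstarW_mul_card_le hdW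
  rw [hk] at hle ⊢
  exact mul_pow_eq_pow_iff_of_le_of_lt Fintype.one_lt_card (dP_le hC) hlo hhi hle

lemma Finset.card_eq_pow_finrank_of_coe_eq {F V : Type*} [Field F] [Fintype F] [AddCommGroup V]
    [Module F V] {C : Finset V} {W : Submodule F V} (hW : (C : Set V) = W) :
    C.card = Fintype.card F ^ Module.finrank F W := by
  have : Finite W := by
    rw [← SetLike.coe_sort_coe, ← hW]
    infer_instance
  have : Module.Finite F W := Module.Finite.of_finite
  rw [← Nat.card_eq_fintype_card, ← Module.natCard_eq_pow_finrank, ← Set.ncard_coe_finset, hW,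
    ← Nat.card_coe_set_eq, SetLike.coe_sort_coe]

theorem stmt12_general {F : Type*} [Field F] [Fintype F] {n : ℕ}
    (w : F → ℕ) (hw : IsWeight w) :
    (∀ C : Finset (Fin n → F), ∀ k : ℕ, 1 ≤ k → k ≤ n →
      C.card = Fintype.card F ^ k →
      (AstarW w n (floorW w n (dW w C)) * C.card = Fintype.card F ^ n ↔
        C.card = Fintype.card F ^ (n - dP C + 1))) ∧
    (∀ C : Finset (Fin n → F),
      (∃ V : Submodule F (Fin n → F), (C : Set (Fin n → F)) = (V : Set (Fin n → F))) →
      C ≠ {(0 : Fin n → F)} →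
      (AstarW w n (floorW w n (dW w C)) * C.card = Fintype.card F ^ n ↔
        C.card = Fintype.card F ^ (n - dP C + 1))) := by
  refine ⟨fun C k hk _ hC => AstarW_floorW_dW_mul_card_eq_iff hw.1 ?_ hC,
    fun C ⟨V, hV⟩ hC0 => ?_⟩
  · rw [hC]
    exact Nat.one_lt_pow (by omega) Fintype.one_lt_card
  · have h0 : (0 : Fin n → F) ∈ C := by
      rw [← mem_coe, hV]
      exact V.zero_mem
    exact AstarW_floorW_dW_mul_card_eq_iff hw.1
      (one_lt_card_iff_nontrivial.2 ((nontrivial_iff_ne_singleton h0).2 hC0))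
      (card_eq_pow_finrank_of_coe_eq hV)

theorem stmt12 {F : Type*} [Field F] [Fintype F] {n : ℕ} (hn : 1 ≤ n)
    (w : F → ℕ) (hw : IsWeight w) :
    (∀ C : Finset (Fin n → F), ∀ k : ℕ, 1 ≤ k → k ≤ n →
      C.card = Fintype.card F ^ k →
      (AstarW w n (floorW w n (dW w C)) * C.card = Fintype.card F ^ n ↔
        C.card = Fintype.card F ^ (n - dP C + 1))) ∧
    (∀ C : Finset (Fin n → F),
      (∃ V : Submodule F (Fin n → F), (C : Set (Fin n → F)) = (V : Set (Fin n → F))) →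
      C ≠ {(0 : Fin n → F)} →
      (AstarW w n (floorW w n (dW w C)) * C.card = Fintype.card F ^ n ↔
        C.card = Fintype.card F ^ (n - dP C + 1))) :=
  stmt12_general w hw
end
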